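/- For every k ≥ 1 there exists a finite poset P with exactly k maximal elements for which the recursively defined subposets S₀ = max P, S_{n+1} = S_n ∪ max{p : ↑p ∩ S_n not connected} satisfy S₀ ⊊ S₁ ⊊ ⋯ ⊊ S_{k−1}; i.e., the bound ℓ ≤ #(max P) − 1 for stabilization is sharp. Specifically, the poset with elements p₁,…,p_k and s₁,…,s_{k−1}, with relations s_i ≤ s_j for i ≥ j, s_i ≤ p₁, and s_i ≤ p_{i+1}, realizes this. -/
import Mathlib


/-- A subset `T` of a poset is connected (as a full subposet) if it is nonempty and any two
of its elements are joined by a finite zigzag of comparabilities within `T`. -/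
def ZigzagConnected {P : Type*} [Preorder P] (T : Set P) : Prop :=
  T.Nonempty ∧ ∀ a b : T, Relation.ReflTransGen (fun x y : T => x.1 ≤ y.1 ∨ y.1 ≤ x.1) a b

/-- The set of maximal elements of a subset `T` of a poset. -/
def maxSet {α : Type*} [PartialOrder α] (T : Set α) : Set α :=
  {a | a ∈ T ∧ ∀ b ∈ T, a ≤ b → b = a}

/-- The recursively defined subsets: `S₀ = max P` and
`S_{n+1} = S_n ∪ max {p : ↑p ∩ S_n is not connected}`. -/
def Sseq (P : Type*) [PartialOrder P] : ℕ → Set P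
  | 0 => maxSet Set.univ
  | n + 1 => Sseq P n ∪ maxSet {p | ¬ ZigzagConnected (Set.Ici p ∩ Sseq P n)}

/-- The assumptions on the poset `P`: (1) `P ⊆ ↓S` for some finite `S ⊆ P`; (2) any
intersection of two subsets, each having maximal elements and with nonempty intersection,
itself has a maximal element. -/
def AsnFin (P : Type*) [PartialOrder P] : Prop :=
  (∃ S : Set P, S.Finite ∧ ∀ p : P, ∃ s ∈ S, p ≤ s) ∧
  (∀ A B : Set P, (A ∩ B).Nonempty → (maxSet A).Nonempty → (maxSet B).Nonempty →
    (maxSet (A ∩ B)).Nonempty)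

inductive PP (k : ℕ) where
  | p : Fin k → PP k
  | s : Fin (k-1) → PP k
deriving DecidableEq, Fintype

def pLe (k : ℕ) : PP k → PP k → Prop
  | .p a, .p b => a = b
  | .p _, .s _ => False
  | .s i, .p b => b.val ≤ i.val + 1
  | .s i, .s j => j.val ≤ i.val

instance PPorder (k : ℕ) : PartialOrder (PP k) where
  le := pLe k
  le_refl x := by cases x <;> simp [pLe]
  le_trans x y z hxy hyz := by
    cases x <;> cases y <;> cases z <;> simp_all [pLe] <;> omega
  le_antisymm x y hxy hyx := by
    cases x <;> cases y <;> simp_all [pLe]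
    exact Fin.ext (by omega)

theorem pLe_iff {k : ℕ} (x y : PP k) : x ≤ y ↔ pLe k x y := Iff.rfl

def Tset (k n : ℕ) : Set (PP k) := fun x => match x with | .p _ => True | .s i => i.val < n

@[simp] lemma mem_T_p {k n : ℕ} (a : Fin k) : PP.p a ∈ Tset k n := trivial
@[simp] lemma mem_T_s {k n : ℕ} (i : Fin (k-1)) : PP.s i ∈ Tset k n ↔ i.val < n := Iff.rfl

lemma cone_conn {k : ℕ} {T : Set (PP k)} (m : PP k) (hm : m ∈ T) (h : ∀ x ∈ T, m ≤ x) :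
    ZigzagConnected T := by
  refine ⟨⟨m, hm⟩, fun a b => ?_⟩
  exact Relation.ReflTransGen.trans (b := ⟨m, hm⟩)
    (Relation.ReflTransGen.single (Or.inr (h a a.2)))
    (Relation.ReflTransGen.single (Or.inl (h b b.2)))

lemma conn_of_mem {k n : ℕ} {x : PP k} (hx : x ∈ Tset k n) :
    ZigzagConnected (Set.Ici x ∩ Tset k n) :=
  cone_conn x ⟨le_refl x, hx⟩ (fun _ hy => hy.1)

lemma not_conn {k n : ℕ} (hk : 1 ≤ k) (i : Fin (k-1)) (hi : n ≤ i.val) :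
    ¬ ZigzagConnected (Set.Ici (PP.s i) ∩ Tset k n) := by
  rintro ⟨-, hconn⟩
  set q : PP k := PP.p ⟨i.val + 1, by omega⟩ with hq
  have hqmem : q ∈ Set.Ici (PP.s i) ∩ Tset k n := ⟨by simp [pLe_iff, pLe, hq], trivial⟩
  have h0mem : PP.p ⟨0, hk⟩ ∈ Set.Ici (PP.s i) ∩ Tset k n := ⟨by simp [pLe_iff, pLe], trivial⟩
  have isolated : ∀ y ∈ Set.Ici (PP.s i) ∩ Tset k n, (y ≤ q ∨ q ≤ y) → y = q := by
    rintro y ⟨-, hyT⟩ hcomp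
    cases y with
    | p b =>
      rcases hcomp with h | h <;> simp [pLe_iff, pLe, hq] at h ⊢ <;>
        [exact h; exact h.symm]
    | s j =>
      have : j.val < n := hyT
      rcases hcomp with h | h <;> simp [pLe_iff, pLe, hq] at h <;> omega
  have key : ∀ b, Relation.ReflTransGen
      (fun x y : (Set.Ici (PP.s i) ∩ Tset k n : Set (PP k)) => x.1 ≤ y.1 ∨ y.1 ≤ x.1)
      ⟨q, hqmem⟩ b → b = ⟨q, hqmem⟩ := by
    intro b hb
    induction hb with
    | refl => rfl
    | @tail c d hsub step ih =>
      subst ih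
      exact Subtype.ext (isolated d.1 d.2 (Or.symm step))
  have := key ⟨_, h0mem⟩ (hconn _ _)
  have h0 : (PP.p ⟨0, hk⟩ : PP k) = q := congrArg Subtype.val this
  rw [hq] at h0
  exact absurd h0 (by simp [Fin.ext_iff])

lemma sseq_eq (k : ℕ) (hk : 1 ≤ k) : ∀ n, Sseq (PP k) n = Tset k n := by
  intro n
  induction n with
  | zero =>
    show maxSet Set.univ = _
    ext x
    cases x with
    | p a =>
      simp only [mem_T_p, iff_true]
      refine ⟨trivial, fun b _ hb => ?_⟩
      cases b with
      | p c => simp [pLe_iff, pLe] at hb; simp [hb]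
      | s j => exact absurd hb (by simp [pLe_iff, pLe])
    | s i =>
      simp only [mem_T_s]
      constructor
      · rintro ⟨-, hmax⟩
        have := hmax (PP.p ⟨0, hk⟩) trivial (by simp [pLe_iff, pLe])
        exact absurd this (by simp)
      · omega
  | succ n ih =>
    show Sseq (PP k) n ∪ maxSet _ = _
    rw [ih]
    set D : Set (PP k) := {p | ¬ ZigzagConnected (Set.Ici p ∩ Tset k n)} with hD
    have hDsub : D ⊆ {x | ∃ j : Fin (k-1), x = .s j ∧ n ≤ j.val} := by
      intro x hx
      cases x with
      | p a => exact absurd (conn_of_mem (mem_T_p a)) hx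
      | s j =>
        refine ⟨j, rfl, ?_⟩
        by_contra h
        exact hx (conn_of_mem (by simp; omega))
    ext x
    simp only [Set.mem_union]
    constructor
    · rintro (hx | hx)
      · cases x with
        | p a => trivial
        | s i => have : i.val < n := hx; simp; omega
      · obtain ⟨j, rfl, hj⟩ := hDsub hx.1
        have : j.val = n := by
          by_contra h
          have hn : n < k - 1 := by omega
          have hmem : PP.s ⟨n, hn⟩ ∈ D := not_conn hk ⟨n, hn⟩ (le_refl n)
          have := hx.2 (PP.s ⟨n, hn⟩) hmem (by simp [pLe_iff, pLe]; omega)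
          simp [PP.s.injEq, Fin.ext_iff] at this
          omega
        simp; omega
    · intro hx
      cases x with
      | p a => exact Or.inl trivial
      | s i =>
        have hi : i.val < n + 1 := hx
        rcases Nat.lt_or_ge i.val n with h | h
        · exact Or.inl h
        · have hieq : i.val = n := by omega
          refine Or.inr ⟨not_conn hk i h, fun b hb hle => ?_⟩
          obtain ⟨j, rfl, hj⟩ := hDsub hb
          have : j.val ≤ i.val := hle
          simp [PP.s.injEq, Fin.ext_iff]
          omega

/-- For every `k ≥ 1` there exists a finite poset `P` with exactly `k` maximal
elements for which the chain `S₀ ⊊ S₁ ⊊ ⋯ ⊊ S_{k−1}` is strictly increasing, i.e. the bound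
`ℓ ≤ #(max P) − 1` for stabilization is sharp. -/
theorem Sseq_bound_sharp (k : ℕ) (hk : 1 ≤ k) :
    ∃ (P : Type) (iP : PartialOrder P), Finite P ∧
      (@maxSet P iP (Set.univ : Set P)).ncard = k ∧
      ∀ i : ℕ, i < k - 1 → @Sseq P iP i ⊂ @Sseq P iP (i + 1) := by
  refine ⟨PP k, PPorder k, inferInstance, ?_, ?_⟩
  · have h0 : maxSet (Set.univ : Set (PP k)) = Set.range PP.p := by
      have := sseq_eq k hk 0
      rw [show Sseq (PP k) 0 = maxSet Set.univ from rfl] at this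
      rw [this]
      ext x
      cases x with
      | p a => simp [Tset]
      | s i => simp [Tset]
    rw [h0]
    have hinj : Function.Injective (PP.p (k := k)) := fun a b h => by
      cases h; rfl
    rw [Set.ncard_eq_toFinset_card']
    rw [Set.toFinset_range]
    rw [Finset.card_image_of_injective _ hinj]
    simp
  · intro i hi
    rw [sseq_eq k hk i, sseq_eq k hk (i+1)]
    constructor
    · intro x hx
      cases x with
      | p a => trivial
      | s j => have : j.val < i := hx; simp; omega
    · intro hsub
      have := hsub (a := PP.s ⟨i, hi⟩) (by simp)
      simp at this
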